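/- Suppose conditions (d1) and (d2) hold. Then for every R ∈ (0,∞) there exist constants p, h₀ ∈ (0,∞) such that for every h ∈ (0,h₀) and all x, y ∈ ℝ^d with ‖x‖₋ ≤ R, ‖y‖₋ ≤ R and |x−y| ≤ √h: P_{x,y}[X̃ = Ỹ] ≥ p, where (X̃, Ỹ) is the coupling of MALA transition steps from x and y. -/

import Mathlib

open MeasureTheory ProbabilityTheory Set
open scoped ENNReal Classical RealInnerProductSpace

noncomputable section

/-- Euclidean state space `ℝ^d`. -/
abbrev Ed (d : ℕ) := EuclideanSpace ℝ (Fin d)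

/-- The standard Gaussian measure `N(0, I_d)` on `ℝ^d`. -/
def stdGaussian (d : ℕ) : Measure (Ed d) :=
  (Measure.pi fun _ : Fin d => gaussianReal 0 1).map
    (MeasurableEquiv.toLp 2 (Fin d → ℝ))

/-- The uniform distribution on the unit interval. -/
def unif01 : Measure ℝ := volume.restrict (Set.Ioc (0:ℝ) 1)

variable {d : ℕ}

/-- The potential `U(x) = |x|²/2 + V(x)`. -/
def Ufn (V : Ed d → ℝ) (x : Ed d) : ℝ := ‖x‖ ^ 2 / 2 + V x

/-- The proposal variance `h − h²/4`. -/
def sVar (h : ℝ) : ℝ := h - h ^ 2 / 4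

/-- The proposal mean `x̂ = x − (h/2)x − (h/2)∇V(x)`. -/
def hatM (h : ℝ) (V : Ed d → ℝ) (x : Ed d) : Ed d :=
  x - (h / 2) • x - (h / 2) • gradient V x

/-- Lebesgue density of `N(m, s·I_d)` at `w`. -/
def gaussDens (s : ℝ) (m w : Ed d) : ℝ :=
  (2 * Real.pi * s) ^ (-(d : ℝ) / 2) * Real.exp (-‖w - m‖ ^ 2 / (2 * s))

/-- The Metropolis–Hastings acceptance probability
`α_h(x,y) = min(1, μ(y)p_h(y,x)/(μ(x)p_h(x,y)))` for the target `μ ∝ e^{−U}` and the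
semi-implicit Euler proposal kernel `p_h(x,·) = N(x̂, (h−h²/4)I_d)`. -/
def acc (h : ℝ) (V : Ed d → ℝ) (x y : Ed d) : ℝ :=
  min 1 (Real.exp (-Ufn V y) * gaussDens (sVar h) (hatM h V y) x /
    (Real.exp (-Ufn V x) * gaussDens (sVar h) (hatM h V x) y))

/-- Density ratio `φ_ŷ(w)/φ_x̂(w)` of the proposal densities. -/
def propRatio (h : ℝ) (xh yh w : Ed d) : ℝ :=
  Real.exp ((‖w - xh‖ ^ 2 - ‖w - yh‖ ^ 2) / (2 * sVar h))

/-- The reflected proposal `ŷ + √(h−h²/4)·(I − 2êêᵀ)z`. -/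
def reflPt (h : ℝ) (xh yh z : Ed d) : Ed d :=
  yh + Real.sqrt (sVar h) •
    (z - (2 * ⟪‖xh - yh‖⁻¹ • (xh - yh), z⟫) • (‖xh - yh‖⁻¹ • (xh - yh)))

/-- The coupled MALA transition step `(X̃, Ỹ)` from `(x,y)`, as a function of the noise
`z = ω.1.1`, the uniform variable `u = ω.1.2` coupling the proposals, and the common
uniform variable `ũ = ω.2` used in the accept/reject step. -/
def malaCpl (h : ℝ) (V : Ed d → ℝ) (x y : Ed d) (ω : (Ed d × ℝ) × ℝ) : Ed d × Ed d :=
  let xh := hatM h V x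
  let yh := hatM h V y
  let X' := xh + Real.sqrt (sVar h) • ω.1.1
  let Y' := if ω.1.2 ≤ propRatio h xh yh X' then X' else reflPt h xh yh ω.1.1
  (if ω.2 ≤ acc h V x X' then X' else x,
   if ω.2 ≤ acc h V y Y' then Y' else y)

/-- The joint law of the coupled MALA transition steps `(X̃, Ỹ)` from `x` and `y`. -/
def malaMeasure (h : ℝ) (V : Ed d → ℝ) (x y : Ed d) : Measure (Ed d × Ed d) :=
  (((stdGaussian d).prod unif01).prod unif01).map (malaCpl h V x y)

/-- Comparison of the auxiliary norm `‖·‖₋` with the Euclidean norm: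
`‖x‖₋ ≤ |x| ≤ d·‖x‖₋`. -/
def NormComp (d : ℕ) (nm : Seminorm ℝ (Ed d)) : Prop :=
  ∀ x : Ed d, nm x ≤ ‖x‖ ∧ ‖x‖ ≤ d * nm x

/-- Condition (d1): bounds on the derivatives of `U` up to order 4 in terms of `‖·‖₋`. -/
def CondD1 (V : Ed d → ℝ) (nm : Seminorm ℝ (Ed d)) (C : ℕ → ℝ) (p : ℕ → ℕ) : Prop :=
  ∀ n : ℕ, 1 ≤ n → n ≤ 4 → ∀ (x : Ed d) (ξ : Fin n → Ed d),
    |iteratedFDeriv ℝ n (Ufn V) x ξ| ≤ C n * max 1 (nm x ^ p n) * ∏ i, nm (ξ i)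

/-- Condition (d2): strict convexity of `U` outside the Euclidean ball of radius `Rc`. -/
def CondD2 (V : Ed d → ℝ) (Kc Rc : ℝ) : Prop :=
  ∀ x ξ : Ed d, Rc ≤ ‖x‖ → Kc * ‖ξ‖ ^ 2 ≤ iteratedFDeriv ℝ 2 (Ufn V) x ![ξ, ξ]

/-! Both chains move to the common proposal `X' = x̂ + √(h - h²/4) z` as soon as the noise `z`
lies in a fixed ball, the proposal-coupling uniform lies below the density ratio `φ_ŷ(X')/φ_x̂(X')`
and the common acceptance uniform lies below both acceptance probabilities. For `|x - y| ≤ √h`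
the distances `|X' - ŷ|`, `|x - X̂'|` and `|y - X̂'|` (with `X̂'` the proposal mean from `X'`)
are `O(√h)`, while the Gaussian exponents divide their squares by the proposal variance `≈ h`.
So the density ratio and both acceptance probabilities are bounded below uniformly in small `h`,
by constants that only involve bounds of `U` and `∇U` on a compact ball. -/
instance isProbabilityMeasure_stdGaussian : IsProbabilityMeasure (stdGaussian d) :=
  Measure.isProbabilityMeasure_map (MeasurableEquiv.measurable _).aemeasurable

instance isProbabilityMeasure_unif01 : IsProbabilityMeasure unif01 :=
  ⟨by simp [unif01]⟩

lemma unif01_Ioc {a : ℝ} (ha₁ : a ≤ 1) : unif01 (Ioc 0 a) = ENNReal.ofReal a := by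
  rw [unif01, Measure.restrict_apply measurableSet_Ioc, Ioc_inter_Ioc, max_self,
    min_eq_left ha₁, Real.volume_Ioc, sub_zero]

lemma exists_stdGaussian_closedBall_pos : ∃ r : ℕ, 0 < stdGaussian d (Metric.closedBall 0 r) := by
  refine exists_measure_pos_of_not_measure_iUnion_null ?_
  simp [Metric.iUnion_closedBall_nat]

lemma continuous_gradient {V : Ed d → ℝ} (hV : ContDiff ℝ 4 V) : Continuous (gradient V) :=
  (InnerProductSpace.toDual ℝ (Ed d)).symm.continuous.comp (hV.continuous_fderiv (by norm_num))

lemma continuous_hatM (h : ℝ) {V : Ed d → ℝ} (hV : ContDiff ℝ 4 V) : Continuous (hatM h V) := by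
  have := continuous_gradient hV
  unfold hatM; fun_prop

lemma continuous_Ufn {V : Ed d → ℝ} (hV : ContDiff ℝ 4 V) : Continuous (Ufn V) := by
  have := hV.continuous
  unfold Ufn; fun_prop

lemma measurable_acc (h : ℝ) {V : Ed d → ℝ} (hV : ContDiff ℝ 4 V) (x : Ed d) :
    Measurable (acc h V x) := by
  have := continuous_Ufn hV
  have := continuous_hatM h hV
  unfold acc gaussDens
  refine measurable_const.min (Measurable.div ?_ ?_) <;> apply Continuous.measurable <;> fun_prop

lemma measurable_malaCpl (h : ℝ) {V : Ed d → ℝ} (hV : ContDiff ℝ 4 V) (x y : Ed d) :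
    Measurable (malaCpl h V x y) := by
  set xh := hatM h V x
  set yh := hatM h V y
  have hrefl : Continuous (reflPt h xh yh) := by unfold reflPt; fun_prop
  have hratio : Continuous (propRatio h xh yh) := by unfold propRatio; fun_prop
  have hX' : Measurable fun ω : (Ed d × ℝ) × ℝ => xh + Real.sqrt (sVar h) • ω.1.1 := by
    fun_prop
  have hY' : Measurable fun ω : (Ed d × ℝ) × ℝ =>
      if ω.1.2 ≤ propRatio h xh yh (xh + Real.sqrt (sVar h) • ω.1.1) then
        xh + Real.sqrt (sVar h) • ω.1.1 else reflPt h xh yh ω.1.1 :=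
    .ite (measurableSet_le (by fun_prop) (hratio.measurable.comp hX')) hX'
      (hrefl.measurable.comp (by fun_prop))
  exact .prodMk (.ite (measurableSet_le measurable_snd ((measurable_acc h hV x).comp hX')) hX'
      measurable_const)
    (.ite (measurableSet_le measurable_snd ((measurable_acc h hV y).comp hY')) hY'
      measurable_const)

lemma exists_nonneg_bound_of_continuous {X E : Type*} [SeminormedAddCommGroup X]
    [ProperSpace X] [SeminormedAddCommGroup E] {f : X → E} (hf : Continuous f) (ρ : ℝ) :
    ∃ C, 0 ≤ C ∧ ∀ w : X, ‖w‖ ≤ ρ → ‖f w‖ ≤ C := by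
  obtain ⟨C, hC⟩ := (isCompact_closedBall (0 : X) ρ).exists_bound_of_continuousOn hf.continuousOn
  exact ⟨max C 0, le_max_right _ _, fun w hw => (hC w (by simpa using hw)).trans (le_max_left _ _)⟩

lemma malaCpl_fst_eq_snd {h : ℝ} {V : Ed d → ℝ} {x y z : Ed d} {u v : ℝ}
    (hu : u ≤ propRatio h (hatM h V x) (hatM h V y) (hatM h V x + Real.sqrt (sVar h) • z))
    (hvx : v ≤ acc h V x (hatM h V x + Real.sqrt (sVar h) • z))
    (hvy : v ≤ acc h V y (hatM h V x + Real.sqrt (sVar h) • z)) :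
    (malaCpl h V x y ((z, u), v)).1 = (malaCpl h V x y ((z, u), v)).2 := by
  simp only [malaCpl, if_pos hu, if_pos hvx, if_pos hvy]

lemma le_malaMeasure_diag {h : ℝ} {V : Ed d → ℝ} (hV : ContDiff ℝ 4 V) {x y : Ed d}
    {S : Set (Ed d)} {ρ α : ℝ} (hρ₀ : 0 ≤ ρ) (hρ₁ : ρ ≤ 1) (hα₀ : 0 ≤ α) (hα₁ : α ≤ 1)
    (hS : ∀ z ∈ S,
      ρ ≤ propRatio h (hatM h V x) (hatM h V y) (hatM h V x + Real.sqrt (sVar h) • z) ∧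
      α ≤ acc h V x (hatM h V x + Real.sqrt (sVar h) • z) ∧
      α ≤ acc h V y (hatM h V x + Real.sqrt (sVar h) • z)) :
    (stdGaussian d S).toReal * ρ * α ≤ (malaMeasure h V x y {w | w.1 = w.2}).toReal := by
  set P := ((stdGaussian d).prod unif01).prod unif01
  have hsub : (S ×ˢ Ioc 0 ρ) ×ˢ Ioc 0 α ⊆ malaCpl h V x y ⁻¹' {w | w.1 = w.2} := by
    rintro ⟨⟨z, u⟩, v⟩ ⟨⟨hz, hu⟩, hv⟩
    obtain ⟨hρz, hαx, hαy⟩ := hS z hz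
    exact malaCpl_fst_eq_snd (hu.2.trans hρz) (hv.2.trans hαx) (hv.2.trans hαy)
  calc (stdGaussian d S).toReal * ρ * α = (P ((S ×ˢ Ioc 0 ρ) ×ˢ Ioc 0 α)).toReal := by
        simp [P, Measure.prod_prod, unif01_Ioc hρ₁, unif01_Ioc hα₁, hρ₀, hα₀]
    _ ≤ (P (malaCpl h V x y ⁻¹' {w | w.1 = w.2})).toReal :=
        ENNReal.toReal_mono (measure_ne_top _ _) (measure_mono hsub)
    _ ≤ (malaMeasure h V x y {w | w.1 = w.2}).toReal :=
        ENNReal.toReal_mono (by rw [malaMeasure]; exact measure_ne_top _ _)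
          (Measure.le_map_apply (measurable_malaCpl h hV x y).aemeasurable _)

lemma acc_eq_min_exp {h : ℝ} (hs : 0 < sVar h) (V : Ed d → ℝ) (x w : Ed d) :
    acc h V x w = min 1 (Real.exp (Ufn V x - Ufn V w +
      (‖w - hatM h V x‖ ^ 2 - ‖x - hatM h V w‖ ^ 2) / (2 * sVar h))) := by
  have hK : (2 * Real.pi * sVar h) ^ (-(d : ℝ) / 2) ≠ 0 := by positivity
  rw [acc, gaussDens, gaussDens, mul_left_comm (Real.exp _), mul_left_comm (Real.exp _),
    mul_div_mul_left _ _ hK, ← Real.exp_add, ← Real.exp_add, ← Real.exp_sub]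
  congr 2
  ring

lemma exp_neg_le_acc {h M c : ℝ} (hs : 0 < sVar h) {V : Ed d → ℝ} {x w : Ed d}
    (hM : Ufn V w - Ufn V x ≤ M) (hx : ‖x - hatM h V w‖ ^ 2 ≤ 2 * sVar h * c)
    (hMc : 0 ≤ M + c) : Real.exp (-(M + c)) ≤ acc h V x w := by
  rw [acc_eq_min_exp hs]
  refine le_min (Real.exp_le_one_iff.2 (by linarith)) (Real.exp_le_exp.2 ?_)
  have : ‖x - hatM h V w‖ ^ 2 / (2 * sVar h) ≤ c := by rw [div_le_iff₀ (by positivity)]; linarith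
  have : 0 ≤ ‖w - hatM h V x‖ ^ 2 / (2 * sVar h) := by positivity
  rw [sub_div]
  linarith

lemma exp_neg_le_propRatio {h c : ℝ} (hs : 0 < sVar h) {xh yh w : Ed d}
    (hw : ‖w - yh‖ ^ 2 ≤ 2 * sVar h * c) : Real.exp (-c) ≤ propRatio h xh yh w := by
  refine Real.exp_le_exp.2 ?_
  have : ‖w - yh‖ ^ 2 / (2 * sVar h) ≤ c := by rw [div_le_iff₀ (by positivity)]; linarith
  have : 0 ≤ ‖w - xh‖ ^ 2 / (2 * sVar h) := by positivity
  rw [sub_div]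
  linarith

lemma norm_hatM_sub_self_le {h G : ℝ} (hh : 0 ≤ h) {V : Ed d → ℝ} {w : Ed d}
    (hw : ‖w + gradient V w‖ ≤ G) : ‖hatM h V w - w‖ ≤ h / 2 * G := by
  have : hatM h V w - w = -(h / 2) • (w + gradient V w) := by unfold hatM; module
  rw [this, norm_smul, norm_neg, Real.norm_of_nonneg (by positivity)]
  gcongr

lemma sq_le_two_sVar_mul {h c a : ℝ} (hh : 0 ≤ h) (hh₂ : h ≤ 2) (ha : 0 ≤ a)
    (hv : a ≤ Real.sqrt h * c) : a ^ 2 ≤ 2 * sVar h * c ^ 2 := by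
  have hsq : a ^ 2 ≤ h * c ^ 2 := by
    simpa [mul_pow, Real.sq_sqrt hh] using pow_le_pow_left₀ ha hv 2
  have : h ≤ 2 * sVar h := by unfold sVar; nlinarith
  nlinarith [sq_nonneg c]

lemma proposal_dist_le {h A G r : ℝ} {V : Ed d → ℝ} {x y z : Ed d}
    (hg : ∀ w : Ed d, ‖w‖ ≤ A + 1 → ‖w + gradient V w‖ ≤ G)
    (hh : 0 < h) (hh₁ : h ≤ 1) (hc : Real.sqrt h * (G + r + 1) ≤ 1)
    (hx : ‖x‖ ≤ A) (hy : ‖y‖ ≤ A) (hxy : ‖x - y‖ ≤ Real.sqrt h) (hz : ‖z‖ ≤ r) :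
    let X' := hatM h V x + Real.sqrt (sVar h) • z
    ‖X'‖ ≤ A + 1 ∧ ‖X' - hatM h V y‖ ≤ Real.sqrt h * (G + r + 1) ∧
      ‖x - hatM h V X'‖ ≤ Real.sqrt h * (G + r + 1) ∧
      ‖y - hatM h V X'‖ ≤ Real.sqrt h * (G + r + 1) := by
  intro X'
  have hX'def : X' = hatM h V x + Real.sqrt (sVar h) • z := rfl
  have hh_le : h ≤ Real.sqrt h := Real.le_sqrt_of_sq_le (by nlinarith)
  have hG : 0 ≤ G := (norm_nonneg _).trans (hg x (by linarith))
  have hhG : h * G ≤ Real.sqrt h * G := mul_le_mul_of_nonneg_right hh_le hG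
  have hsz : ‖Real.sqrt (sVar h) • z‖ ≤ Real.sqrt h * r := by
    rw [norm_smul, Real.norm_of_nonneg (Real.sqrt_nonneg _)]
    exact mul_le_mul (Real.sqrt_le_sqrt (by unfold sVar; nlinarith)) hz (norm_nonneg _)
      (Real.sqrt_nonneg _)
  have hx' := norm_hatM_sub_self_le hh.le (hg x (by linarith))
  have hy' := norm_hatM_sub_self_le hh.le (hg y (by linarith))
  have hX'x : ‖X' - x‖ ≤ h / 2 * G + Real.sqrt h * r :=
    calc ‖X' - x‖ = ‖(hatM h V x - x) + Real.sqrt (sVar h) • z‖ := by rw [hX'def]; abel_nf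
      _ ≤ h / 2 * G + Real.sqrt h * r := (norm_add_le _ _).trans (add_le_add hx' hsz)
  have hX' : ‖X'‖ ≤ A + 1 := by
    have := norm_le_norm_add_norm_sub' X' x
    nlinarith
  have hxX' : ‖x - hatM h V X'‖ ≤ Real.sqrt h * (G + r) := by
    have := norm_hatM_sub_self_le hh.le (hg X' hX')
    calc ‖x - hatM h V X'‖ = ‖(x - X') - (hatM h V X' - X')‖ := by congr 1; abel
      _ ≤ ‖X' - x‖ + ‖hatM h V X' - X'‖ := by rw [norm_sub_rev X' x]; exact norm_sub_le _ _
      _ ≤ Real.sqrt h * (G + r) := by nlinarith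
  refine ⟨hX', ?_, by nlinarith [Real.sqrt_nonneg h], ?_⟩
  · calc ‖X' - hatM h V y‖
        = ‖(hatM h V x - x) + (x - y) + (y - hatM h V y) + Real.sqrt (sVar h) • z‖ := by
          rw [hX'def]; abel_nf
      _ ≤ ‖hatM h V x - x‖ + ‖x - y‖ + ‖hatM h V y - y‖ + ‖Real.sqrt (sVar h) • z‖ := by
          rw [norm_sub_rev (hatM h V y)]; exact norm_add₄_le
      _ ≤ Real.sqrt h * (G + r + 1) := by nlinarith
  · calc ‖y - hatM h V X'‖ = ‖(y - x) + (x - hatM h V X')‖ := by congr 1; abel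
      _ ≤ ‖x - y‖ + ‖x - hatM h V X'‖ := by rw [norm_sub_rev x y]; exact norm_add_le _ _
      _ ≤ Real.sqrt h * (G + r + 1) := by nlinarith

lemma le_malaMeasure_diag_of_local_bounds {h A G M r : ℝ} {V : Ed d → ℝ}
    (hV : ContDiff ℝ 4 V) {x y : Ed d}
    (hg : ∀ w : Ed d, ‖w‖ ≤ A + 1 → ‖w + gradient V w‖ ≤ G)
    (hU : ∀ w : Ed d, ‖w‖ ≤ A + 1 → ‖Ufn V w‖ ≤ M)
    (hr : 0 ≤ r) (hh : 0 < h) (hhc : h * (G + r + 1) ^ 2 ≤ 1)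
    (hx : ‖x‖ ≤ A) (hy : ‖y‖ ≤ A) (hxy : ‖x - y‖ ≤ Real.sqrt h) :
    (stdGaussian d (Metric.closedBall 0 r)).toReal * Real.exp (-(G + r + 1) ^ 2) *
      Real.exp (-(2 * M + (G + r + 1) ^ 2)) ≤
        (malaMeasure h V x y {w | w.1 = w.2}).toReal := by
  set c := G + r + 1
  have hG : 0 ≤ G := (norm_nonneg _).trans (hg x (by linarith))
  have hM : 0 ≤ M := (norm_nonneg _).trans (hU x (by linarith))
  have hc₁ : 1 ≤ c ^ 2 := one_le_pow₀ (by linarith)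
  have hh₁ : h ≤ 1 := by nlinarith
  have hs : 0 < sVar h := by unfold sVar; nlinarith
  have hc : Real.sqrt h * c ≤ 1 := by
    rw [← Real.sqrt_sq (by positivity : 0 ≤ c), ← Real.sqrt_mul hh.le]
    exact Real.sqrt_le_one.2 hhc
  have hUosc : ∀ a b : Ed d, ‖a‖ ≤ A + 1 → ‖b‖ ≤ A + 1 → Ufn V a - Ufn V b ≤ 2 * M := by
    intro a b ha hb
    have ha' := hU a ha
    have hb' := hU b hb
    rw [Real.norm_eq_abs] at ha' hb'
    linarith [le_abs_self (Ufn V a), neg_abs_le (Ufn V b)]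
  refine le_malaMeasure_diag hV (Real.exp_pos _).le (Real.exp_le_one_iff.2 (by nlinarith))
    (Real.exp_pos _).le (Real.exp_le_one_iff.2 (by nlinarith)) fun z hz => ?_
  obtain ⟨hX', hX'y, hxX', hyX'⟩ :=
    proposal_dist_le (V := V) hg hh hh₁ hc hx hy hxy (by simpa using hz)
  exact ⟨exp_neg_le_propRatio hs (sq_le_two_sVar_mul hh.le (by linarith) (norm_nonneg _) hX'y),
    exp_neg_le_acc hs (hUosc _ _ hX' (by linarith))
      (sq_le_two_sVar_mul hh.le (by linarith) (norm_nonneg _) hxX') (by positivity),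
    exp_neg_le_acc hs (hUosc _ _ hX' (by linarith))
      (sq_le_two_sVar_mul hh.le (by linarith) (norm_nonneg _) hyX') (by positivity)⟩

theorem stmt19_general (d : ℕ)
    (V : Ed d → ℝ) (hV : ContDiff ℝ 4 V)
    (nm : Seminorm ℝ (Ed d)) (hnm : NormComp d nm)
    (R : ℝ) :
    ∃ pr h₀ : ℝ, 0 < pr ∧ 0 < h₀ ∧
      ∀ h : ℝ, 0 < h → h < h₀ →
      ∀ x y : Ed d, nm x ≤ R → nm y ≤ R → ‖x - y‖ ≤ Real.sqrt h →
        pr ≤ ((malaMeasure h V x y) {w | w.1 = w.2}).toReal := by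
  obtain ⟨G, hG, hg⟩ := exists_nonneg_bound_of_continuous (f := fun w => w + gradient V w)
    (continuous_id.add (continuous_gradient hV)) (d * R + 1)
  obtain ⟨M, -, hU⟩ := exists_nonneg_bound_of_continuous (continuous_Ufn hV) (d * R + 1)
  obtain ⟨r, hr⟩ := exists_stdGaussian_closedBall_pos (d := d)
  set c : ℝ := G + r + 1
  have hc : 0 < c ^ 2 := by positivity
  refine ⟨(stdGaussian d (Metric.closedBall 0 r)).toReal * Real.exp (-c ^ 2) *
      Real.exp (-(2 * M + c ^ 2)), (c ^ 2)⁻¹,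
    mul_pos (mul_pos (ENNReal.toReal_pos hr.ne' (measure_ne_top _ _)) (Real.exp_pos _))
      (Real.exp_pos _), inv_pos.2 hc, fun h hh hh₀ x y hx hy hxy => ?_⟩
  have hnorm : ∀ w : Ed d, nm w ≤ R → ‖w‖ ≤ d * R := fun w hw =>
    (hnm w).2.trans (mul_le_mul_of_nonneg_left hw d.cast_nonneg)
  have hhc : h * c ^ 2 ≤ 1 := ((lt_inv_mul_iff₀' hc).1 (by simpa using hh₀)).le
  exact le_malaMeasure_diag_of_local_bounds hV hg hU r.cast_nonneg hh hhc (hnorm x hx)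
    (hnorm y hy) hxy

/-- Lemma 6.1: under (d1) and (d2), for every `R > 0` there are
constants `p, h₀ > 0` such that for every `h ∈ (0,h₀)` the coupled MALA chains started
in the `‖·‖₋`-ball of radius `R` at distance `|x−y| ≤ √h` meet in one step with
probability at least `p`. -/
theorem stmt19 (d : ℕ) (hd : 1 ≤ d)
    (V : Ed d → ℝ) (hV : ContDiff ℝ 4 V)
    (nm : Seminorm ℝ (Ed d)) (hnm : NormComp d nm)
    (C : ℕ → ℝ) (p : ℕ → ℕ) (hC : ∀ n, 0 ≤ C n)
    (Kc Rc : ℝ) (hKc : 0 < Kc) (hRc : 0 < Rc)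
    (hd1 : CondD1 V nm C p) (hd2 : CondD2 V Kc Rc)
    (R : ℝ) (hR : 0 < R) :
    ∃ pr h₀ : ℝ, 0 < pr ∧ 0 < h₀ ∧
      ∀ h : ℝ, 0 < h → h < h₀ →
      ∀ x y : Ed d, nm x ≤ R → nm y ≤ R → ‖x - y‖ ≤ Real.sqrt h →
        pr ≤ ((malaMeasure h V x y) {w | w.1 = w.2}).toReal :=
  stmt19_general d V hV nm hnm R

end
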